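/- Let H be a hypergraph with an Euler family F and incidence graph G, and let G_F be the subgraph of G corresponding to F. If G1 is a nontrivial connected component of G_F, then at least two v-vertices of G1 are not cut vertices of G_F. Furthermore, if G1 contains a cycle of length 2k, then at least k v-vertices of G1 are not cut vertices of G_F. -/

import Mathlib

/-
In `G_F` every non-isolated e-vertex has two distinct v-neighbours (the anchors on either side
of it in its trail), and every edge has a v-vertex end. Hence if `w` is a cut vertex and
`a ≠ w` lies in its component, the side of `w` away from `a` contains a v-vertex strictly
farther from `a` than `w`. So in any set of v-vertices that is closed under moving on without
passing through `a`, a vertex farthest from `a` is not a cut vertex. The farthest v-vertex `w₁`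
of the component from one of its v-vertices, and then the farthest one from `w₁`, give two.
A cycle of length `2k` carries at least `k` v-vertices, and each of them, `u`, is either not a
cut vertex or cuts off from the rest of the cycle a part containing a non-cut v-vertex; these
parts are disjoint for distinct `u`.
-/

open scoped Classical

/-- A hypergraph: a finite nonempty vertex type `V`, a finite index type `E` of
edges (so that repeated edges are allowed, as in a multiset of edges), and a map
`mem` assigning to each edge the finite set of its vertices. -/
structure HGraph where
  V : Type
  E : Type
  [fintypeV : Fintype V]
  [fintypeE : Fintype E]
  [nonemptyV : Nonempty V]
  mem : E → Finset V

attribute [instance] HGraph.fintypeV HGraph.fintypeE HGraph.nonemptyV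

namespace HGraph

/-- A walk `v₀ e₁ v₁ e₂ … e_k v_k` in a hypergraph: consecutive anchors are
distinct and both lie in the connecting edge. -/
structure Walk (H : HGraph) where
  k : ℕ
  vtx : Fin (k + 1) → H.V
  edge : Fin k → H.E
  mem_left : ∀ i : Fin k, vtx i.castSucc ∈ H.mem (edge i)
  mem_right : ∀ i : Fin k, vtx i.succ ∈ H.mem (edge i)
  ne : ∀ i : Fin k, vtx i.castSucc ≠ vtx i.succ

/-- A trail is a walk with pairwise distinct edges. -/
def Walk.IsTrail {H : HGraph} (W : H.Walk) : Prop :=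
  Function.Injective W.edge

/-- A closed walk: `v₀ = v_k` and `k ≥ 2`. -/
def Walk.IsClosed {H : HGraph} (W : H.Walk) : Prop :=
  W.vtx 0 = W.vtx (Fin.last W.k) ∧ 2 ≤ W.k

def Walk.IsClosedTrail {H : HGraph} (W : H.Walk) : Prop :=
  W.IsTrail ∧ W.IsClosed

/-- The anchors of a walk. -/
def Walk.anchors {H : HGraph} (W : H.Walk) : Set H.V := Set.range W.vtx

/-- The set of edges traversed by a walk. -/
def Walk.edgeSet {H : HGraph} (W : H.Walk) : Set H.E := Set.range W.edge

/-- An Euler tour: a closed trail traversing every edge exactly once. -/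
def IsEulerTour (H : HGraph) (W : H.Walk) : Prop :=
  W.IsClosedTrail ∧ Function.Bijective W.edge

def HasEulerTour (H : HGraph) : Prop := ∃ W : H.Walk, H.IsEulerTour W

/-- A hypergraph is eulerian if it has no edges or admits an Euler tour. -/
def IsEulerian (H : HGraph) : Prop := IsEmpty H.E ∨ H.HasEulerTour

/-- An Euler family: a set of pairwise anchor-disjoint, edge-disjoint closed
trails jointly traversing every edge exactly once. -/
def IsEulerFamily (H : HGraph) (F : Set H.Walk) : Prop :=
  (∀ W ∈ F, W.IsClosedTrail) ∧
  (∀ W ∈ F, ∀ W' ∈ F, W ≠ W' →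
    Disjoint W.anchors W'.anchors ∧ Disjoint W.edgeSet W'.edgeSet) ∧
  (∀ e : H.E, ∃ W ∈ F, e ∈ W.edgeSet)

/-- A hypergraph is quasi-eulerian if it has no edges or admits an Euler family. -/
def IsQuasiEulerian (H : HGraph) : Prop :=
  IsEmpty H.E ∨ ∃ F : Set H.Walk, H.IsEulerFamily F

/-- A minimum Euler family: one with the fewest components. -/
def IsMinEulerFamily (H : HGraph) (F : Set H.Walk) : Prop :=
  H.IsEulerFamily F ∧ ∀ F' : Set H.Walk, H.IsEulerFamily F' → F.ncard ≤ F'.ncard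

/-- `H` is `k`-uniform if each edge has exactly `k` vertices. -/
def IsUniform (H : HGraph) (k : ℕ) : Prop := ∀ e : H.E, (H.mem e).card = k

/-- A covering `k`-hypergraph (`k ≥ 3`): a nonempty `k`-uniform hypergraph in
which every `(k-1)`-subset of the vertex set lies in at least one edge. -/
def IsCovering (H : HGraph) (k : ℕ) : Prop :=
  3 ≤ k ∧ Nonempty H.E ∧ H.IsUniform k ∧
    ∀ S : Finset H.V, S.card = k - 1 → ∃ e : H.E, S ⊆ H.mem e

/-- The incidence graph of a hypergraph: the bipartite simple graph on
`V ⊕ E` joining `v` and `e` exactly when `v ∈ e`. -/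
def incidenceGraph (H : HGraph) : SimpleGraph (H.V ⊕ H.E) where
  Adj x y :=
    (∃ v e, x = Sum.inl v ∧ y = Sum.inr e ∧ v ∈ H.mem e) ∨
    (∃ v e, x = Sum.inr e ∧ y = Sum.inl v ∧ v ∈ H.mem e)
  symm := by
    refine ⟨?_⟩
    rintro x y (⟨v, e, rfl, rfl, h⟩ | ⟨v, e, rfl, rfl, h⟩)
    · exact Or.inr ⟨v, e, rfl, rfl, h⟩
    · exact Or.inl ⟨v, e, rfl, rfl, h⟩
  loopless := by
    refine ⟨?_⟩
    rintro x (⟨v, e, rfl, h, -⟩ | ⟨v, e, rfl, h, -⟩) <;> exact absurd h (by simp)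

/-- `v` and `e` appear consecutively in some trail of the family `F`. -/
def ConsecIn (H : HGraph) (F : Set H.Walk) (v : H.V) (e : H.E) : Prop :=
  ∃ W ∈ F, ∃ i : Fin W.k, W.edge i = e ∧ (W.vtx i.castSucc = v ∨ W.vtx i.succ = v)

/-- The spanning subgraph of the incidence graph corresponding to an Euler
family `F`: its edges are the incident pairs `ve` consecutive in some trail of `F`. -/
def eulerSubgraph (H : HGraph) (F : Set H.Walk) : SimpleGraph (H.V ⊕ H.E) where
  Adj x y :=
    (∃ v e, x = Sum.inl v ∧ y = Sum.inr e ∧ H.ConsecIn F v e) ∨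
    (∃ v e, x = Sum.inr e ∧ y = Sum.inl v ∧ H.ConsecIn F v e)
  symm := by
    refine ⟨?_⟩
    rintro x y (⟨v, e, rfl, rfl, h⟩ | ⟨v, e, rfl, rfl, h⟩)
    · exact Or.inr ⟨v, e, rfl, rfl, h⟩
    · exact Or.inl ⟨v, e, rfl, rfl, h⟩
  loopless := by
    refine ⟨?_⟩
    rintro x (⟨v, e, rfl, h, -⟩ | ⟨v, e, rfl, h, -⟩) <;> exact absurd h (by simp)

end HGraph

/-- The degree of a vertex of a simple graph (number of neighbours). -/
noncomputable def sdeg {α : Type*} (G : SimpleGraph α) (x : α) : ℕ :=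
  (G.neighborSet x).ncard

/-- A connected component of a simple graph is nontrivial if it contains an edge. -/
def NontrivComp {α : Type*} (G : SimpleGraph α) (c : G.ConnectedComponent) : Prop :=
  ∃ x y, G.Adj x y ∧ G.connectedComponentMk x = c

/-- The number of nontrivial connected components of a simple graph. -/
noncomputable def ntComps {α : Type*} (G : SimpleGraph α) : ℕ :=
  {c : G.ConnectedComponent | NontrivComp G c}.ncard

/-- A cut vertex of a simple graph: a vertex whose deletion increases the number
of connected components, i.e. some two vertices distinct from it are joined by a
walk but by no walk avoiding it. -/
def IsCutVtx {α : Type*} (G : SimpleGraph α) (v : α) : Prop :=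
  ∃ x y, x ≠ v ∧ y ≠ v ∧ G.Reachable x y ∧ ¬ ∃ p : G.Walk x y, v ∉ p.support

/-- An `F`-interchanging cycle: a cycle of the incidence graph such that every
e-vertex on it is incident in `G_F` with exactly one edge of the cycle. -/
def IsInterchanging (H : HGraph) (F : Set H.Walk) {x : H.V ⊕ H.E}
    (C : (H.incidenceGraph).Walk x x) : Prop :=
  C.IsCycle ∧ ∀ e : H.E, (Sum.inr e : H.V ⊕ H.E) ∈ C.support →
    ∃! s : Sym2 (H.V ⊕ H.E),
      s ∈ C.edges ∧ (Sum.inr e : H.V ⊕ H.E) ∈ s ∧ s ∈ (H.eulerSubgraph F).edgeSet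

/-- The symmetric difference of a simple graph with a set of potential edges. -/
def symmDiffEdges {α : Type*} (G : SimpleGraph α) (s : Set (Sym2 α)) : SimpleGraph α :=
  SimpleGraph.fromEdgeSet (symmDiff G.edgeSet s)

/-- An `F`-diminishing cycle: an `F`-interchanging cycle `C` such that
`G_F Δ C` has fewer nontrivial connected components than `G_F`. -/
def IsDiminishing (H : HGraph) (F : Set H.Walk) {x : H.V ⊕ H.E}
    (C : (H.incidenceGraph).Walk x x) : Prop :=
  IsInterchanging H F C ∧
    ntComps (symmDiffEdges (H.eulerSubgraph F) {s | s ∈ C.edges}) <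
      ntComps (H.eulerSubgraph F)

namespace SimpleGraph

variable {α : Type*} {G : SimpleGraph α}

def ReachableAvoiding (G : SimpleGraph α) (v u w : α) : Prop :=
  ∃ p : G.Walk u w, v ∉ p.support

namespace ReachableAvoiding

variable {v u w t : α}

lemma refl (h : u ≠ v) : G.ReachableAvoiding v u u :=
  ⟨.nil, by simpa using h.symm⟩

lemma symm (h : G.ReachableAvoiding v u w) : G.ReachableAvoiding v w u := by
  obtain ⟨p, hp⟩ := h
  exact ⟨p.reverse, by simpa using hp⟩

lemma trans (h₁ : G.ReachableAvoiding v u w) (h₂ : G.ReachableAvoiding v w t) :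
    G.ReachableAvoiding v u t := by
  obtain ⟨p, hp⟩ := h₁
  obtain ⟨q, hq⟩ := h₂
  exact ⟨p.append q, by simp [Walk.mem_support_append_iff, hp, hq]⟩

lemma of_adj (h : G.Adj u w) (hu : u ≠ v) (hw : w ≠ v) : G.ReachableAvoiding v u w :=
  ⟨h.toWalk, by simp [hu.symm, hw.symm]⟩

lemma reachable (h : G.ReachableAvoiding v u w) : G.Reachable u w :=
  h.elim fun p _ ↦ ⟨p⟩

lemma ne_left (h : G.ReachableAvoiding v u w) : u ≠ v := by
  rintro rfl
  obtain ⟨p, hp⟩ := h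
  exact hp p.start_mem_support

lemma ne_right (h : G.ReachableAvoiding v u w) : w ≠ v :=
  h.symm.ne_left

end ReachableAvoiding

lemma Reachable.reachable_of_not_reachableAvoiding {v x y : α} (hxy : G.Reachable x y)
    (hv : ¬ G.ReachableAvoiding v x y) : G.Reachable x v := by
  obtain ⟨p⟩ := hxy
  have hvp : v ∈ p.support := by_contra fun h ↦ hv ⟨p, h⟩
  exact ⟨p.takeUntil v hvp⟩

lemma Reachable.dist_lt_of_not_reachableAvoiding {a w b : α} (hr : G.Reachable a b)
    (haw : a ≠ w) (hwb : w ≠ b) (hno : ¬ G.ReachableAvoiding w a b) :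
    G.dist a w < G.dist a b ∧ G.ReachableAvoiding a w b := by
  obtain ⟨p, hp⟩ := hr.exists_walk_length_eq_dist
  have hw : w ∈ p.support := by_contra fun h ↦ hno ⟨p, h⟩
  refine ⟨?_, p.dropUntil w hw, fun ha ↦ ?_⟩
  · calc G.dist a w ≤ (p.takeUntil w hw).length := dist_le _
      _ < p.length := Walk.length_takeUntil_lt_length hw hwb
      _ = G.dist a b := hp
  · have := dist_le ((p.dropUntil w hw).dropUntil a ha)
    have := Walk.length_dropUntil_le_length (p.dropUntil w hw) ha
    have := Walk.length_dropUntil_lt_length hw haw.symm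
    omega

lemma Walk.IsCycle.reachableAvoiding_snd {u t : α} {c : G.Walk u u} (hc : c.IsCycle)
    (ht : t ∈ c.support) (htu : t ≠ u) : G.ReachableAvoiding u c.snd t := by
  have hpath : c.tail.IsPath := by
    have := c.cons_tail_eq hc.not_nil ▸ hc
    exact ((Walk.cons_isCycle_iff _ _).mp this).1
  have ht' : t ∈ c.tail.support := by
    rw [c.support_tail_of_not_nil hc.not_nil]
    rw [← c.cons_tail_support, List.mem_cons] at ht
    exact ht.resolve_left htu
  exact ⟨c.tail.takeUntil t ht', Walk.endpoint_notMem_support_takeUntil hpath ht' htu.symm⟩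

lemma Walk.IsCycle.reachableAvoiding {x u t t' : α} {C : G.Walk x x} (hC : C.IsCycle)
    (hu : u ∈ C.support) (ht : t ∈ C.support) (ht' : t' ∈ C.support) (htu : t ≠ u)
    (ht'u : t' ≠ u) : G.ReachableAvoiding u t t' := by
  have hc := hC.rotate hu
  have hrot : ∀ s ∈ C.support, s ∈ (C.rotate u hu).support := fun s hs ↦
    (Walk.mem_support_rotate_iff C u hu).mpr hs
  exact (hc.reachableAvoiding_snd (hrot t ht) htu).symm.trans
    (hc.reachableAvoiding_snd (hrot t' ht') ht'u)

lemma Walk.IsCycle.le_ncard_support_inter {P : Set α} (hP : ∀ ⦃y z⦄, G.Adj y z → y ∈ P ∨ z ∈ P)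
    {x : α} {C : G.Walk x x} (hC : C.IsCycle) {k : ℕ} (hk : C.length = 2 * k) :
    k ≤ {u | u ∈ P ∧ u ∈ C.support}.ncard := by
  have hpos : ∀ i : Fin k, ∃ n, 2 * (i : ℕ) + 1 ≤ n ∧ n ≤ 2 * (i : ℕ) + 2 ∧ C.getVert n ∈ P := by
    intro i
    rcases hP (C.adj_getVert_succ (show 2 * (i : ℕ) + 1 < C.length by omega)) with h | h
    · exact ⟨_, le_rfl, by omega, h⟩
    · exact ⟨_, by omega, le_rfl, h⟩
  choose n hn₁ hn₂ hnP using hpos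
  have hn : ∀ i, n i ∈ {m | 1 ≤ m ∧ m ≤ C.length} := fun i ↦ by
    have := hn₁ i; have := hn₂ i; have := i.2
    exact ⟨by omega, by omega⟩
  calc k = (Set.univ : Set (Fin k)).ncard := by simp
    _ ≤ _ := by
      refine Set.ncard_le_ncard_of_injOn (fun i ↦ C.getVert (n i))
        (fun i _ ↦ ⟨hnP i, C.getVert_mem_support _⟩) (fun i _ j _ h ↦ Fin.ext ?_)
        ((List.finite_toSet C.support).subset fun _ hu ↦ hu.2)
      have := hC.getVert_injOn (hn i) (hn j) h
      have := hn₁ i; have := hn₂ i; have := hn₁ j; have := hn₂ j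
      omega

def cutOff (G : SimpleGraph α) (u : α) (K : Set α) : Set α :=
  {t | ∀ t' ∈ K, t' ≠ u → ¬ G.ReachableAvoiding u t t'}

lemma self_mem_cutOff (u : α) (K : Set α) : u ∈ G.cutOff u K :=
  fun _ _ _ h ↦ h.ne_left rfl

lemma mem_cutOff_of_reachableAvoiding {u t t' : α} {K : Set α} (ht : t ∈ G.cutOff u K)
    (h : G.ReachableAvoiding u t t') : t' ∈ G.cutOff u K :=
  fun s hs hsu h' ↦ ht s hs hsu (h.trans h')

/-- A shortest walk from `t` to `u` would have to meet `u'`, and before that `u`. -/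
lemma eq_of_mem_cutOff {u u' t : α} {K : Set α} (hu : u ∈ K) (hu' : u' ∈ K)
    (ht : t ∈ G.cutOff u K) (ht' : t ∈ G.cutOff u' K) (hr : G.Reachable t u) : u = u' := by
  by_contra hne
  obtain ⟨p, hp⟩ := hr.exists_walk_length_eq_dist
  have hu'p : u' ∈ p.support := by_contra fun h ↦ ht' u hu hne ⟨p, h⟩
  have huq : u ∈ (p.takeUntil u' hu'p).support :=
    by_contra fun h ↦ ht u' hu' (Ne.symm hne) ⟨_, h⟩
  have := dist_le ((p.takeUntil u' hu'p).takeUntil u huq)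
  have := (p.takeUntil u' hu'p).length_takeUntil_le_length huq
  have := p.length_takeUntil_lt_length hu'p (Ne.symm hne)
  omega

lemma exists_mem_cutOff_of_isCutVtx {u : α} {K : Set α} (hcut : IsCutVtx G u)
    (hK : ∀ t ∈ K, ∀ t' ∈ K, t ≠ u → t' ≠ u → G.ReachableAvoiding u t t') :
    ∃ z ∈ G.cutOff u K, z ≠ u ∧ G.Reachable u z := by
  obtain ⟨x, y, hxu, hyu, hxy, hno⟩ := hcut
  have hxu' : G.Reachable x u := hxy.reachable_of_not_reachableAvoiding hno
  by_cases hx : x ∈ G.cutOff u K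
  · exact ⟨x, hx, hxu, hxu'.symm⟩
  obtain ⟨t, ht, htu, hxt⟩ : ∃ t ∈ K, t ≠ u ∧ G.ReachableAvoiding u x t := by
    simpa [cutOff] using hx
  refine ⟨y, fun t' ht' ht'u hyt' ↦ ?_, hyu, hxu'.symm.trans hxy⟩
  exact hno (hxt.trans ((hK t ht t' ht' htu ht'u).trans hyt'.symm))

def TwoNeighborsIn (G : SimpleGraph α) (P : Set α) : Prop :=
  ∀ ⦃z s⦄, G.Adj z s → z ∉ P → ∃ u₁ u₂, u₁ ≠ u₂ ∧ u₁ ∈ P ∧ u₂ ∈ P ∧ G.Adj z u₁ ∧ G.Adj z u₂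

namespace TwoNeighborsIn

variable {P : Set α}

lemma exists_reachableAvoiding (hP : G.TwoNeighborsIn P) {z s w : α} (hz : G.Adj z s)
    (hzw : z ≠ w) : ∃ u ∈ P, G.ReachableAvoiding w z u := by
  by_cases hzP : z ∈ P
  · exact ⟨z, hzP, .refl hzw⟩
  obtain ⟨u₁, u₂, hne, hu₁, hu₂, ha₁, ha₂⟩ := hP hz hzP
  by_cases hu₁w : u₁ = w
  · exact ⟨u₂, hu₂, .of_adj ha₂ hzw (hu₁w ▸ hne.symm)⟩
  · exact ⟨u₁, hu₁, .of_adj ha₁ hzw hu₁w⟩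

lemma exists_pair_reachable_of_adj (hP : G.TwoNeighborsIn P) {x y : α} (h : G.Adj x y) :
    ∃ u₁ u₂, u₁ ≠ u₂ ∧ u₁ ∈ P ∧ u₂ ∈ P ∧ G.Reachable x u₁ ∧ G.Reachable x u₂ := by
  obtain ⟨u₁, hu₁, h₁⟩ := hP.exists_reachableAvoiding h (G.ne_of_adj h)
  obtain ⟨u₂, hu₂, h₂⟩ := hP.exists_reachableAvoiding h.symm h₁.ne_right.symm
  exact ⟨u₁, u₂, h₂.ne_right.symm, hu₁, hu₂, h₁.reachable, h.reachable.trans h₂.reachable⟩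

lemma exists_dist_lt_of_isCutVtx (hP : G.TwoNeighborsIn P) {a w : α} (hcut : IsCutVtx G w)
    (hr : G.Reachable a w) (haw : a ≠ w) :
    ∃ u ∈ P, G.dist a w < G.dist a u ∧ G.ReachableAvoiding a w u := by
  obtain ⟨x, y, hxw, hyw, hxy, hno⟩ := hcut
  have hxw' : G.Reachable x w := hxy.reachable_of_not_reachableAvoiding hno
  have hside : ¬ G.ReachableAvoiding w a x ∨ ¬ G.ReachableAvoiding w a y := by
    by_contra! h
    exact hno (h.1.symm.trans h.2)
  obtain ⟨z, hzw, hwz, hz⟩ : ∃ z, z ≠ w ∧ G.Reachable w z ∧ ¬ G.ReachableAvoiding w a z := by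
    rcases hside with h | h
    · exact ⟨x, hxw, hxw'.symm, h⟩
    · exact ⟨y, hyw, hxw'.symm.trans hxy, h⟩
  obtain ⟨s, hs⟩ := hwz.nonempty_neighborSet_right hzw.symm
  obtain ⟨u, huP, hzu⟩ := hP.exists_reachableAvoiding hs hzw
  have hau : ¬ G.ReachableAvoiding w a u := fun h ↦ hz (h.trans hzu.symm)
  obtain ⟨hlt, hav⟩ := (hr.trans (hwz.trans hzu.reachable)).dist_lt_of_not_reachableAvoiding
    haw hzu.ne_right.symm hau
  exact ⟨u, huP, hlt, hav⟩

lemma exists_mem_not_isCutVtx [Finite α] (hP : G.TwoNeighborsIn P) {a : α} {S : Set α}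
    (hSr : ∀ u ∈ S, G.Reachable a u)
    (hS : ∀ w ∈ S, ∀ u ∈ P, G.ReachableAvoiding a w u → u ∈ S) (hne : ∃ u ∈ S, u ≠ a) :
    ∃ w ∈ S, w ≠ a ∧ ¬ IsCutVtx G w := by
  obtain ⟨u, huS, hua⟩ := hne
  obtain ⟨w, hwS, hmax⟩ := S.exists_max_image (G.dist a) S.toFinite ⟨u, huS⟩
  have hwa : w ≠ a := by
    rintro rfl
    have := (hSr u huS).pos_dist_of_ne hua.symm
    have := hmax u huS
    simp only [dist_self] at this
    omega
  refine ⟨w, hwS, hwa, fun hcut ↦ ?_⟩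
  obtain ⟨u', hu'P, hlt, hav⟩ := hP.exists_dist_lt_of_isCutVtx hcut (hSr w hwS) hwa.symm
  exact (hmax u' (hS w hwS u' hu'P hav)).not_gt hlt

theorem two_le_ncard_not_isCutVtx [Finite α] (hP : G.TwoNeighborsIn P)
    {c : G.ConnectedComponent} (hc : NontrivComp G c) :
    2 ≤ {u | u ∈ P ∧ G.connectedComponentMk u = c ∧ ¬ IsCutVtx G u}.ncard := by
  obtain ⟨x, y, hxy, rfl⟩ := hc
  obtain ⟨u₁, u₂, hne, hu₁, hu₂, hr₁, hr₂⟩ := hP.exists_pair_reachable_of_adj hxy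
  set S := {u | u ∈ P ∧ G.Reachable x u}
  have hS : ∀ a, ∀ w ∈ S, ∀ u ∈ P, G.ReachableAvoiding a w u → u ∈ S :=
    fun _ w hw u hu hav ↦ ⟨hu, hw.2.trans hav.reachable⟩
  have hSr : ∀ a ∈ S, ∀ u ∈ S, G.Reachable a u := fun a ha u hu ↦ ha.2.symm.trans hu.2
  have hu₁S : u₁ ∈ S := ⟨hu₁, hr₁⟩
  obtain ⟨w₁, hw₁, hw₁u₁, hnc₁⟩ :=
    hP.exists_mem_not_isCutVtx (hSr u₁ hu₁S) (hS u₁) ⟨u₂, ⟨hu₂, hr₂⟩, hne.symm⟩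
  obtain ⟨w₂, hw₂, hw₂w₁, hnc₂⟩ :=
    hP.exists_mem_not_isCutVtx (hSr w₁ hw₁) (hS w₁) ⟨u₁, hu₁S, hw₁u₁.symm⟩
  calc 2 = ({w₁, w₂} : Set α).ncard := (Set.ncard_pair hw₂w₁.symm).symm
    _ ≤ _ := by
      refine Set.ncard_le_ncard ?_
      rintro w (rfl | rfl)
      · exact ⟨hw₁.1, ConnectedComponent.eq.2 hw₁.2.symm, hnc₁⟩
      · exact ⟨hw₂.1, ConnectedComponent.eq.2 hw₂.2.symm, hnc₂⟩

lemma exists_not_isCutVtx_mem_cutOff [Finite α] (hP : G.TwoNeighborsIn P) {u : α} {K : Set α}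
    (hK : ∀ t ∈ K, ∀ t' ∈ K, t ≠ u → t' ≠ u → G.ReachableAvoiding u t t') (hu : u ∈ P) :
    ∃ w ∈ P, w ∈ G.cutOff u K ∧ G.Reachable u w ∧ ¬ IsCutVtx G w := by
  by_cases hcut : IsCutVtx G u
  · obtain ⟨z, hz, hzu, hr⟩ := exists_mem_cutOff_of_isCutVtx hcut hK
    obtain ⟨s, hs⟩ := hr.nonempty_neighborSet_right hzu.symm
    obtain ⟨u₀, hu₀, hzu₀⟩ := hP.exists_reachableAvoiding hs hzu
    obtain ⟨w, ⟨hwP, hwK, hwr⟩, -, hw⟩ :=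
      hP.exists_mem_not_isCutVtx (S := {w | w ∈ P ∧ w ∈ G.cutOff u K ∧ G.Reachable u w})
        (fun _ h ↦ h.2.2)
        (fun w hw t ht hav ↦
          ⟨ht, mem_cutOff_of_reachableAvoiding hw.2.1 hav, hw.2.2.trans hav.reachable⟩)
        ⟨u₀, ⟨hu₀, mem_cutOff_of_reachableAvoiding hz hzu₀, hr.trans hzu₀.reachable⟩,
          hzu₀.ne_right⟩
    exact ⟨w, hwP, hwK, hwr, hw⟩
  · exact ⟨u, hu, G.self_mem_cutOff u K, .rfl, hcut⟩

theorem ncard_support_le_ncard_not_isCutVtx [Finite α] (hP : G.TwoNeighborsIn P) {x : α}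
    {C : G.Walk x x} (hC : C.IsCycle) :
    {u | u ∈ P ∧ u ∈ C.support}.ncard ≤ {u | u ∈ P ∧
      G.connectedComponentMk u = G.connectedComponentMk x ∧ ¬ IsCutVtx G u}.ncard := by
  have key : ∀ u ∈ {u | u ∈ P ∧ u ∈ C.support}, ∃ w ∈ P,
      w ∈ G.cutOff u {t | t ∈ C.support} ∧ G.Reachable u w ∧ ¬ IsCutVtx G w :=
    fun u hu ↦ hP.exists_not_isCutVtx_mem_cutOff
      (fun _ ht _ ht' ↦ hC.reachableAvoiding hu.2 ht ht') hu.1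
  choose! f hfP hfK hfr hf using key
  refine Set.ncard_le_ncard_of_injOn f (fun u hu ↦ ⟨hfP u hu, ?_, hf u hu⟩)
    fun u hu u' hu' he ↦ eq_of_mem_cutOff hu.2 hu'.2 (hfK u hu) (he ▸ hfK u' hu') (hfr u hu).symm
  exact ConnectedComponent.eq.2 ((hfr u hu).symm.trans ⟨C.dropUntil u hu.2⟩)

end TwoNeighborsIn

end SimpleGraph

namespace HGraph

variable {H : HGraph} {F : Set H.Walk}

lemma eulerSubgraph_twoNeighborsIn : (H.eulerSubgraph F).TwoNeighborsIn (Set.range Sum.inl) := by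
  rintro _ _ (⟨v, e, rfl, rfl, -⟩ | ⟨v, e, rfl, rfl, W, hW, i, rfl, -⟩) hz
  · exact absurd ⟨v, rfl⟩ hz
  · exact ⟨_, _, by simpa using W.ne i, ⟨_, rfl⟩, ⟨_, rfl⟩,
      Or.inr ⟨_, _, rfl, rfl, W, hW, i, rfl, Or.inl rfl⟩,
      Or.inr ⟨_, _, rfl, rfl, W, hW, i, rfl, Or.inr rfl⟩⟩

lemma eulerSubgraph_adj_mem_range_inl ⦃y z : H.V ⊕ H.E⦄ (h : (H.eulerSubgraph F).Adj y z) :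
    y ∈ Set.range Sum.inl ∨ z ∈ Set.range Sum.inl := by
  rcases h with ⟨v, e, rfl, rfl, -⟩ | ⟨v, e, rfl, rfl, -⟩
  · exact .inl ⟨v, rfl⟩
  · exact .inr ⟨v, rfl⟩

end HGraph

theorem eulerSubgraph_noncut_vvertices_general (H : HGraph) (F : Set H.Walk)
    (c : (H.eulerSubgraph F).ConnectedComponent)
    (hc : NontrivComp (H.eulerSubgraph F) c) :
    2 ≤ {v : H.V | (H.eulerSubgraph F).connectedComponentMk (Sum.inl v) = c ∧
          ¬ IsCutVtx (H.eulerSubgraph F) (Sum.inl v)}.ncard ∧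
    ∀ (k : ℕ) (x : H.V ⊕ H.E) (C : (H.eulerSubgraph F).Walk x x),
      C.IsCycle → C.length = 2 * k →
      (H.eulerSubgraph F).connectedComponentMk x = c →
      k ≤ {v : H.V | (H.eulerSubgraph F).connectedComponentMk (Sum.inl v) = c ∧
            ¬ IsCutVtx (H.eulerSubgraph F) (Sum.inl v)}.ncard := by
  have hcount : {v : H.V | (H.eulerSubgraph F).connectedComponentMk (Sum.inl v) = c ∧
      ¬ IsCutVtx (H.eulerSubgraph F) (Sum.inl v)}.ncard = {u | u ∈ Set.range Sum.inl ∧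
      (H.eulerSubgraph F).connectedComponentMk u = c ∧ ¬ IsCutVtx (H.eulerSubgraph F) u}.ncard := by
    rw [← Set.ncard_preimage_of_injective_subset_range Sum.inl_injective fun _ hu ↦ hu.1]
    simp [Set.preimage]
  rw [hcount]
  refine ⟨HGraph.eulerSubgraph_twoNeighborsIn.two_le_ncard_not_isCutVtx hc,
    fun k x C hC hlen hx ↦ ?_⟩
  subst hx
  exact (hC.le_ncard_support_inter HGraph.eulerSubgraph_adj_mem_range_inl hlen).trans
    (HGraph.eulerSubgraph_twoNeighborsIn.ncard_support_le_ncard_not_isCutVtx hC)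

/-- Corollary 4.6: if `G1` is a nontrivial connected component of `G_F`, then at
least two v-vertices of `G1` are not cut vertices of `G_F`; moreover if `G1`
contains a cycle of length `2k`, then at least `k` v-vertices of `G1` are not
cut vertices of `G_F`. -/
theorem eulerSubgraph_noncut_vvertices (H : HGraph) (F : Set H.Walk)
    (hF : H.IsEulerFamily F) (c : (H.eulerSubgraph F).ConnectedComponent)
    (hc : NontrivComp (H.eulerSubgraph F) c) :
    2 ≤ {v : H.V | (H.eulerSubgraph F).connectedComponentMk (Sum.inl v) = c ∧
          ¬ IsCutVtx (H.eulerSubgraph F) (Sum.inl v)}.ncard ∧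
    ∀ (k : ℕ) (x : H.V ⊕ H.E) (C : (H.eulerSubgraph F).Walk x x),
      C.IsCycle → C.length = 2 * k →
      (H.eulerSubgraph F).connectedComponentMk x = c →
      k ≤ {v : H.V | (H.eulerSubgraph F).connectedComponentMk (Sum.inl v) = c ∧
            ¬ IsCutVtx (H.eulerSubgraph F) (Sum.inl v)}.ncard :=
  eulerSubgraph_noncut_vvertices_general H F c hc
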